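/- Let A be the adjacency matrix of a simple undirected graph G on n vertices, let r = 2, and let m ∈ ℕ^k (with k ≥ 4, m_i ≥ 1, Σ_{i=1}^k m_i = n) have the alternating form m = (m_1, m_2, m_3, m_2, m_3, …, m_k)ᵀ, i.e., the interior block sizes alternate between the two values m_2 and m_3. If every partition matrix X ∈ P_m satisfies ⟨A, X B_{2,k} Xᵀ⟩ > 0, then bdw(A) > m_2 + m_3. -/

import Mathlib

open Matrix Finset

attribute [local instance] Classical.propDecidable

noncomputable section

/-- Trace inner product `⟨A,B⟩ = trace(Aᵀ B)`. -/
def traceInner {n : ℕ} (A B : Matrix (Fin n) (Fin n) ℝ) : ℝ :=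
  Matrix.trace (Aᵀ * B)

/-- `A` is the adjacency matrix of a simple undirected graph:
symmetric 0–1 matrix with zero diagonal. -/
def IsAdjacency {n : ℕ} (A : Matrix (Fin n) (Fin n) ℝ) : Prop :=
  (∀ i j, A i j = 0 ∨ A i j = 1) ∧ (∀ i j, A i j = A j i) ∧ ∀ i, A i i = 0

/-- Bandwidth of the graph with adjacency matrix `A` under the labeling `φ`. -/
def bdwLabel {n : ℕ} (A : Matrix (Fin n) (Fin n) ℝ) (φ : Equiv.Perm (Fin n)) : ℕ :=
  Finset.sup Finset.univ fun p : Fin n × Fin n =>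
    if A p.1 p.2 ≠ 0 then (((φ p.1 : ℕ) : ℤ) - ((φ p.2 : ℕ) : ℤ)).natAbs else 0

/-- Bandwidth of the graph with adjacency matrix `A`:
minimum over all labelings. -/
def bdw {n : ℕ} (A : Matrix (Fin n) (Fin n) ℝ) : ℕ :=
  ⨅ φ : Equiv.Perm (Fin n), bdwLabel A φ

/-- `n × k` partition matrices for block sizes `m 0, …, m (k-1)`. -/
def IsPartitionMatrix (n k : ℕ) (m : ℕ → ℕ) (X : Matrix (Fin n) (Fin k) ℝ) : Prop :=
  (∀ i j, X i j = 0 ∨ X i j = 1) ∧ (∀ i, ∑ j, X i j = 1) ∧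
  ∀ j : Fin k, ∑ i, X i j = (m (j : ℕ) : ℝ)

/-- The matrix `B_{r,k}`, with `(B_{r,k})_{uv} = 1` iff `|u - v| > r`. -/
def Bmat (k r : ℕ) : Matrix (Fin k) (Fin k) ℝ :=
  Matrix.of fun u v : Fin k =>
    if (r : ℤ) < |((u : ℕ) : ℤ) - ((v : ℕ) : ℤ)| then 1 else 0

/-- The basic partition matrix `X̄`: the first `m 0` vertices in block `0`,
the next `m 1` vertices in block `1`, and so on. -/
def basicPartition (n k : ℕ) (m : ℕ → ℕ) : Matrix (Fin n) (Fin k) ℝ :=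
  Matrix.of fun (i : Fin n) (j : Fin k) =>
    if (∑ l ∈ Finset.range (j : ℕ), m l) ≤ (i : ℕ) ∧
        (i : ℕ) < ∑ l ∈ Finset.range ((j : ℕ) + 1), m l then 1 else 0

/-- Permutation matrix of a permutation `σ`. -/
def permMatrix {n : ℕ} (σ : Equiv.Perm (Fin n)) : Matrix (Fin n) (Fin n) ℝ :=
  Matrix.of fun i j => if σ i = j then 1 else 0

/-!
A labeling `φ` of bandwidth at most `m 1 + m 2` induces a partition matrix: cut the labels
`0, …, n - 1` into consecutive intervals of sizes `m 0, …, m (k - 1)` and put vertex `i` into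
the block whose interval contains `φ i`. Two blocks whose indices differ by more than `2` are
separated by two whole interior blocks, of total size `m 1 + m 2` by the alternation, so no edge
joins them and `⟨A, X B_{2,k} Xᵀ⟩ = 0`.
-/

theorem exists_bdwLabel_eq_bdw {n : ℕ} (A : Matrix (Fin n) (Fin n) ℝ) :
    ∃ φ, bdwLabel A φ = bdw A :=
  ciInf_mem (bdwLabel A)

theorem natAbs_sub_le_bdwLabel {n : ℕ} {A : Matrix (Fin n) (Fin n) ℝ} (φ : Equiv.Perm (Fin n))
    {i j : Fin n} (hij : A i j ≠ 0) :
    (((φ i : ℕ) : ℤ) - ((φ j : ℕ) : ℤ)).natAbs ≤ bdwLabel A φ := by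
  have h := le_sup (f := fun p : Fin n × Fin n =>
    if A p.1 p.2 ≠ 0 then (((φ p.1 : ℕ) : ℤ) - ((φ p.2 : ℕ) : ℤ)).natAbs else 0) (mem_univ (i, j))
  rwa [if_pos hij] at h

theorem traceInner_mul_mul_transpose_eq_zero {n k : ℕ} {A : Matrix (Fin n) (Fin n) ℝ}
    {X : Matrix (Fin n) (Fin k) ℝ} {B : Matrix (Fin k) (Fin k) ℝ}
    (h : ∀ i j u v, A i j ≠ 0 → X i u ≠ 0 → X j v ≠ 0 → B u v = 0) :
    traceInner A (X * B * Xᵀ) = 0 := by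
  simp only [traceInner, trace, diag_apply, mul_apply, transpose_apply, sum_mul, mul_sum]
  refine sum_eq_zero fun j _ => sum_eq_zero fun i _ => sum_eq_zero fun v _ =>
    sum_eq_zero fun u _ => ?_
  by_cases hA : A i j = 0
  · simp [hA]
  by_cases hXi : X i u = 0
  · simp [hXi]
  by_cases hXj : X j v = 0
  · simp [hXj]
  simp [h i j u v hA hXi hXj]

theorem IsPartitionMatrix.submatrix_perm {n k : ℕ} {m : ℕ → ℕ} {X : Matrix (Fin n) (Fin k) ℝ}
    (hX : IsPartitionMatrix n k m X) (σ : Equiv.Perm (Fin n)) :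
    IsPartitionMatrix n k m (X.submatrix σ id) :=
  ⟨fun i j => hX.1 (σ i) j, fun i => hX.2.1 (σ i),
    fun j => (Equiv.sum_comp σ (X · j)).trans (hX.2.2 j)⟩

theorem monotone_sum_range (m : ℕ → ℕ) : Monotone fun j => ∑ l ∈ range j, m l :=
  fun _ _ hab => sum_le_sum_of_subset (range_subset_range.2 hab)

theorem isPartitionMatrix_basicPartition {n k : ℕ} {m : ℕ → ℕ} (hsum : ∑ i ∈ range k, m i = n) :
    IsPartitionMatrix n k m (basicPartition n k m) := by
  set S : ℕ → ℕ := fun j => ∑ l ∈ range j, m l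
  refine ⟨fun i j => ?_, fun i => ?_, fun j => ?_⟩
  · simp only [basicPartition, of_apply]
    split_ifs <;> simp
  · -- the indicator of `[S j, S (j+1))` telescopes, as `S` is monotone
    have htel : ∀ j, (if S j ≤ i ∧ (i : ℕ) < S (j + 1) then (1 : ℝ) else 0) =
        (if (i : ℕ) < S (j + 1) then 1 else 0) - (if (i : ℕ) < S j then 1 else 0) := by
      intro j
      have : S j ≤ S (j + 1) := monotone_sum_range m j.le_succ
      split_ifs <;> first | omega | norm_num
    have hik : (i : ℕ) < S k := hsum ▸ i.2
    simp only [basicPartition, of_apply]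
    rw [Fin.sum_univ_eq_sum_range (fun j => if S j ≤ i ∧ (i : ℕ) < S (j + 1) then (1 : ℝ) else 0),
      sum_congr rfl fun j _ => htel j, sum_range_sub fun j => if (i : ℕ) < S j then (1 : ℝ) else 0]
    have hS0 : S 0 = 0 := sum_range_zero m
    simp [hik, hS0]
  · have hstep : S (j + 1) = S j + m j := sum_range_succ m j
    have hjn : S (j + 1) ≤ n := hsum ▸ monotone_sum_range m j.2
    have hblock : {x ∈ range n | S j ≤ x ∧ x < S (j + 1)} = Ico (S j) (S (j + 1)) := by
      ext x
      simp only [mem_filter, mem_range, mem_Ico]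
      omega
    simp only [basicPartition, of_apply]
    rw [Fin.sum_univ_eq_sum_range (fun x => if S j ≤ x ∧ x < S (j + 1) then (1 : ℝ) else 0),
      sum_boole, hblock, Nat.card_Ico, hstep, Nat.add_sub_cancel_left]

theorem add_lt_of_blocks_three_apart {m : ℕ → ℕ} {u v a b : ℕ} (huv : u + 3 ≤ v)
    (ha : a < ∑ l ∈ range (u + 1), m l) (hb : ∑ l ∈ range v, m l ≤ b) :
    a + (m (u + 1) + m (u + 2)) < b := by
  have h := monotone_sum_range m huv
  simp only [sum_range_succ] at h ha
  omega

theorem add_eq_of_alternating {k : ℕ} {m : ℕ → ℕ}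
    (halt : ∀ i, 1 ≤ i → i ≤ k - 2 → m i = if i % 2 = 1 then m 1 else m 2)
    {u : ℕ} (hu : u + 4 ≤ k) : m (u + 1) + m (u + 2) = m 1 + m 2 := by
  rw [halt (u + 1) (by omega) (by omega), halt (u + 2) (by omega) (by omega)]
  split_ifs <;> omega

theorem bmat_two_eq_zero_of_basicPartition {n k : ℕ} {m : ℕ → ℕ}
    (halt : ∀ i, 1 ≤ i → i ≤ k - 2 → m i = if i % 2 = 1 then m 1 else m 2)
    {a b : Fin n} {u v : Fin k}
    (ha : basicPartition n k m a u ≠ 0) (hb : basicPartition n k m b v ≠ 0)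
    (hab : (((a : ℕ) : ℤ) - ((b : ℕ) : ℤ)).natAbs ≤ m 1 + m 2) : Bmat k 2 u v = 0 := by
  simp only [basicPartition, of_apply, ne_eq, ite_eq_right_iff, one_ne_zero, imp_false,
    not_not] at ha hb
  simp only [Bmat, of_apply, ite_eq_right_iff, one_ne_zero, imp_false, not_lt, abs_le]
  by_contra hfar
  rcases (show (u : ℕ) + 3 ≤ v ∨ (v : ℕ) + 3 ≤ u by omega) with huv | hvu
  · have := add_lt_of_blocks_three_apart huv ha.2 hb.1
    rw [add_eq_of_alternating halt (by omega)] at this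
    omega
  · have := add_lt_of_blocks_three_apart hvu hb.2 ha.1
    rw [add_eq_of_alternating halt (by omega)] at this
    omega

theorem bandwidth_gt_of_alternating_blocks_general
    (n k : ℕ) (m : ℕ → ℕ) (A : Matrix (Fin n) (Fin n) ℝ)
    (hsum : ∑ i ∈ Finset.range k, m i = n)
    (halt : ∀ i, 1 ≤ i → i ≤ k - 2 → m i = if i % 2 = 1 then m 1 else m 2)
    (hpos : ∀ X : Matrix (Fin n) (Fin k) ℝ, IsPartitionMatrix n k m X →
      0 < traceInner A (X * Bmat k 2 * Xᵀ)) :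
    m 1 + m 2 < bdw A := by
  by_contra! hbdw
  obtain ⟨φ, hφ⟩ := exists_bdwLabel_eq_bdw A
  have hX := (isPartitionMatrix_basicPartition hsum).submatrix_perm φ
  refine (hpos _ hX).ne' (traceInner_mul_mul_transpose_eq_zero fun i j u v hij hiu hjv => ?_)
  exact bmat_two_eq_zero_of_basicPartition halt hiu hjv
    ((natAbs_sub_le_bdwLabel φ hij).trans (hφ ▸ hbdw))

/-- Corollary 2 of the paper: `r = 2`, interior block sizes
alternate between the two values `m_2` and `m_3` (0-indexed: `m 1` and `m 2`);
if every partition matrix `X ∈ P_m` satisfies `⟨A, X B_{2,k} Xᵀ⟩ > 0`,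
then `bdw(A) > m_2 + m_3`. -/
theorem bandwidth_gt_of_alternating_blocks
    (n k : ℕ) (m : ℕ → ℕ) (A : Matrix (Fin n) (Fin n) ℝ)
    (hA : IsAdjacency A) (hk4 : 4 ≤ k) (hkn : k ≤ n)
    (hm : ∀ i < k, 1 ≤ m i) (hsum : ∑ i ∈ Finset.range k, m i = n)
    (halt : ∀ i, 1 ≤ i → i ≤ k - 2 → m i = if i % 2 = 1 then m 1 else m 2)
    (hpos : ∀ X : Matrix (Fin n) (Fin k) ℝ, IsPartitionMatrix n k m X →
      0 < traceInner A (X * Bmat k 2 * Xᵀ)) :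
    m 1 + m 2 < bdw A :=
  bandwidth_gt_of_alternating_blocks_general n k m A hsum halt hpos

end
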